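/- Let (ξ_i)_{i∈ℕ} be an exchangeable sequence of real-valued random variables on a probability space (Ω,F,P) with E(|ξ_1|^p) < ∞ for all p > 0. Then the sequence V_n := (1/n)·Σ_{i=1}^n ξ_i² − ((1/n)·Σ_{i=1}^n ξ_i)² converges P-almost surely to a real-valued random variable V, and V ≥ 0 almost surely. -/

import Mathlib

/-!
For `N ≤ n ≤ 2N` the quantity `n N (Ā_n - Ā_N)` is a sum over `s < N` of blocks
`Y_s = ∑_{i < n - N} (ξ_{N+i} - ξ_{s+i mod N})`, each a sum of differences of pairwise distinct
coordinates. Swapping the two coordinates of one difference is a permutation, so by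
exchangeability the law of the differences is invariant under flipping the sign of any one of
them. In the expansion of `E[Y_s⁴]` every term whose indices do not pair up therefore vanishes,
which gives `E[Y_s⁴] ≤ 48 (n - N)² E[ξ₀⁴]` and `E[(Ā_n - Ā_N)⁴] ≤ 48 E[ξ₀⁴] / n²`.
These bounds are summable along the dyadic times `2^k` and over all `n`, so `Ā_{2^k}` converges
and `Ā_n - Ā_{2^⌊log₂ n⌋} → 0` almost surely. Applied to `ξ` and `ξ²` this gives the limit
`V = lim mean(ξ²) - (lim mean ξ)²`, which is nonnegative since `mean(ξ)² ≤ mean(ξ²)`.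
-/

open MeasureTheory ProbabilityTheory Filter Topology
open scoped ENNReal NNReal

noncomputable section

/-- An (infinite) exchangeable sequence of real random variables: for every `n` and every
permutation `π` of `{0, …, n-1}` the joint law of `(ξ_{π(0)}, …, ξ_{π(n-1)})` equals the
joint law of `(ξ_0, …, ξ_{n-1})`. -/
def Exchangeable {Ω : Type*} [MeasurableSpace Ω] (P : Measure Ω) (ξ : ℕ → Ω → ℝ) : Prop :=
  ∀ (n : ℕ) (π : Equiv.Perm (Fin n)),
    Measure.map (fun ω (i : Fin n) => ξ (π i).val ω) P =
    Measure.map (fun ω (i : Fin n) => ξ i.val ω) P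

theorem abs_mul_mul_mul_le (w x y z : ℝ) :
    |w * x * y * z| ≤ (w ^ 4 + x ^ 4 + y ^ 4 + z ^ 4) / 4 := by
  rw [abs_le]
  constructor <;> nlinarith [sq_nonneg (w * x - y * z), sq_nonneg (w * x + y * z),
    sq_nonneg (w ^ 2 - x ^ 2), sq_nonneg (y ^ 2 - z ^ 2)]

theorem sub_pow_four_le (p q : ℝ) : (p - q) ^ 4 ≤ 8 * (p ^ 4 + q ^ 4) := by
  nlinarith [sq_nonneg (p + q), sq_nonneg (p ^ 2 - q ^ 2), sq_nonneg (p * q),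
    sq_nonneg (p ^ 2 + q ^ 2)]

theorem Fintype.sum_pow_four_le {ι : Type*} [Fintype ι] (y : ι → ℝ) :
    (∑ i, y i) ^ 4 ≤ Fintype.card ι ^ 3 * ∑ i, y i ^ 4 := by
  have h4 : Even 4 := by decide
  calc (∑ i, y i) ^ 4 ≤ (∑ i, |y i|) ^ 4 := by
        rw [← h4.pow_abs]; gcongr; exact Finset.abs_sum_le_sum_abs _ _
    _ ≤ Fintype.card ι ^ 3 * ∑ i, |y i| ^ 4 :=
        pow_sum_le_card_mul_sum_pow (fun i _ => abs_nonneg (y i)) 3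
    _ = Fintype.card ι ^ 3 * ∑ i, y i ^ 4 := by simp only [h4.pow_abs]

theorem Fintype.sum_pow_four_eq_sum_prod {ι : Type*} [Fintype ι] (x : ι → ℝ) :
    (∑ i, x i) ^ 4 = ∑ p : ι × ι × ι × ι, x p.1 * x p.2.1 * x p.2.2.1 * x p.2.2.2 := by
  simp only [Fintype.sum_prod_type, pow_succ, pow_zero, one_mul, Finset.sum_mul, Finset.mul_sum]
  exact Fintype.sum_congr _ _ fun a => Fintype.sum_congr _ _ fun b =>
    Fintype.sum_congr _ _ fun c => Fintype.sum_congr _ _ fun e => by ring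

theorem sum_pairing_indicators {ι : Type*} [Fintype ι] [DecidableEq ι] :
    ∑ p : ι × ι × ι × ι, ((if p.1 = p.2.1 ∧ p.2.2.1 = p.2.2.2 then 1 else 0) +
      (if p.1 = p.2.2.1 ∧ p.2.1 = p.2.2.2 then 1 else 0) +
      (if p.1 = p.2.2.2 ∧ p.2.1 = p.2.2.1 then 1 else 0) : ℝ) = 3 * Fintype.card ι ^ 2 := by
  simp only [Fintype.sum_prod_type, ite_and, Finset.sum_add_distrib, Finset.sum_ite_irrel,
    Finset.sum_const_zero, Finset.sum_ite_eq, Finset.mem_univ, if_true]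
  simp
  ring

theorem exists_sign_flip_eq_neg {ι : Type*} [DecidableEq ι] {a b c e : ι}
    (h : ¬ ((a = b ∧ c = e) ∨ (a = c ∧ b = e) ∨ (a = e ∧ b = c))) :
    ∃ v, ∀ x : ι → ℝ, (if a = v then -x a else x a) * (if b = v then -x b else x b) *
      (if c = v then -x c else x c) * (if e = v then -x e else x e) = -(x a * x b * x c * x e) := by
  by_cases hab : a = b
  · by_cases hca : c = a
    · exact ⟨e, fun x => by grind⟩
    · exact ⟨c, fun x => by grind⟩
  by_cases hac : a = c
  · exact ⟨b, fun x => by grind⟩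
  by_cases hae : a = e
  · exact ⟨b, fun x => by grind⟩
  exact ⟨a, fun x => by grind⟩

theorem exists_tendsto_of_summable_dyadic {a : ℕ → ℝ}
    (hsum : Summable fun k => a (2 ^ (k + 1)) - a (2 ^ k))
    (hblock : Tendsto (fun n => a n - a (2 ^ Nat.log 2 n)) atTop (𝓝 0)) :
    ∃ l, Tendsto a atTop (𝓝 l) := by
  have hpow : Tendsto (fun K => a (2 ^ K)) atTop
      (𝓝 (a 1 + ∑' k, (a (2 ^ (k + 1)) - a (2 ^ k)))) := by
    have := (tendsto_const_nhds (x := a 1)).add hsum.hasSum.tendsto_sum_nat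
    simpa only [Finset.sum_range_sub (fun k => a (2 ^ k)), pow_zero, add_sub_cancel] using this
  have hlog : Tendsto (Nat.log 2) atTop atTop :=
    Nat.log_monotone.tendsto_atTop_atTop fun b => ⟨2 ^ b, (Nat.log_pow one_lt_two b).ge⟩
  exact ⟨_, by simpa using (hpow.comp hlog).add hblock⟩

section FourthMoments

variable {Ω : Type*} [MeasurableSpace Ω] {P : Measure Ω}

theorem memLp_of_integrable_abs_pow {f : Ω → ℝ} (hf : AEStronglyMeasurable f P) {p : ℕ}
    (hp : p ≠ 0) (h : Integrable (fun ω => |f ω| ^ p) P) : MemLp f p P := by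
  rw [← integrable_norm_rpow_iff hf (by exact_mod_cast hp) (ENNReal.natCast_ne_top p)]
  simpa [Real.norm_eq_abs] using h

theorem MeasureTheory.MemLp.integrable_pow_four {f : Ω → ℝ} (hf : MemLp f 4 P) :
    Integrable (fun ω => f ω ^ 4) P := by
  simpa [Real.norm_eq_abs, Even.pow_abs (by decide : Even 4)] using
    hf.integrable_norm_pow (p := 4) (by norm_num)

section Products

variable {f₁ f₂ f₃ f₄ : Ω → ℝ}

theorem integrable_mul_mul_mul (h₁ : MemLp f₁ 4 P) (h₂ : MemLp f₂ 4 P) (h₃ : MemLp f₃ 4 P)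
    (h₄ : MemLp f₄ 4 P) : Integrable (fun ω => f₁ ω * f₂ ω * f₃ ω * f₄ ω) P :=
  Integrable.mono' ((((h₁.integrable_pow_four.add h₂.integrable_pow_four).add
      h₃.integrable_pow_four).add h₄.integrable_pow_four).div_const 4)
    (((h₁.1.mul h₂.1).mul h₃.1).mul h₄.1)
    (ae_of_all _ fun _ => abs_mul_mul_mul_le _ _ _ _)

theorem integral_mul_mul_mul_le (h₁ : MemLp f₁ 4 P) (h₂ : MemLp f₂ 4 P) (h₃ : MemLp f₃ 4 P)
    (h₄ : MemLp f₄ 4 P) :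
    ∫ ω, f₁ ω * f₂ ω * f₃ ω * f₄ ω ∂P ≤
      (∫ ω, f₁ ω ^ 4 ∂P + ∫ ω, f₂ ω ^ 4 ∂P + ∫ ω, f₃ ω ^ 4 ∂P + ∫ ω, f₄ ω ^ 4 ∂P) / 4 := by
  have i₁ := h₁.integrable_pow_four
  have i₁₂ : Integrable (fun ω => f₁ ω ^ 4 + f₂ ω ^ 4) P := i₁.add h₂.integrable_pow_four
  have i₁₂₃ : Integrable (fun ω => f₁ ω ^ 4 + f₂ ω ^ 4 + f₃ ω ^ 4) P :=
    i₁₂.add h₃.integrable_pow_four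
  calc _ ≤ ∫ ω, (f₁ ω ^ 4 + f₂ ω ^ 4 + f₃ ω ^ 4 + f₄ ω ^ 4) / 4 ∂P :=
        integral_mono (integrable_mul_mul_mul h₁ h₂ h₃ h₄)
          ((i₁₂₃.add h₄.integrable_pow_four).div_const 4)
          fun ω => (le_abs_self _).trans (abs_mul_mul_mul_le _ _ _ _)
    _ = _ := by
        rw [integral_div, integral_add i₁₂₃ h₄.integrable_pow_four,
          integral_add i₁₂ h₃.integrable_pow_four, integral_add i₁ h₂.integrable_pow_four]

end Products

variable {ι : Type*} [DecidableEq ι] {d : ι → Ω → ℝ}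

theorem integral_mul_mul_mul_eq_zero_of_not_paired
    (hflip : ∀ v, IdentDistrib (fun ω i => if i = v then -d i ω else d i ω)
      (fun ω i => d i ω) P P)
    {a b c e : ι} (h : ¬ ((a = b ∧ c = e) ∨ (a = c ∧ b = e) ∨ (a = e ∧ b = c))) :
    ∫ ω, d a ω * d b ω * d c ω * d e ω ∂P = 0 := by
  obtain ⟨v, hv⟩ := exists_sign_flip_eq_neg h
  have hF : Measurable fun x : ι → ℝ => x a * x b * x c * x e := by fun_prop
  have hneg : (fun x : ι → ℝ => x a * x b * x c * x e) ∘
      (fun ω i => if i = v then -d i ω else d i ω) = fun ω => -(d a ω * d b ω * d c ω * d e ω) :=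
    funext fun ω => hv fun i => d i ω
  have := ((hflip v).comp hF).integral_eq
  rw [hneg, integral_neg, Function.comp_def] at this
  linarith

theorem integral_sum_pow_four_le [Fintype ι] (hd : ∀ i, MemLp (d i) 4 P) {M : ℝ}
    (hM : ∀ i, ∫ ω, d i ω ^ 4 ∂P ≤ M)
    (hflip : ∀ v, IdentDistrib (fun ω i => if i = v then -d i ω else d i ω)
      (fun ω i => d i ω) P P) :
    ∫ ω, (∑ i, d i ω) ^ 4 ∂P ≤ 3 * Fintype.card ι ^ 2 * M := by
  simp_rw [Fintype.sum_pow_four_eq_sum_prod]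
  rw [integral_finsetSum _ fun p _ => integrable_mul_mul_mul (hd _) (hd _) (hd _) (hd _),
    ← sum_pairing_indicators, Finset.sum_mul]
  refine Finset.sum_le_sum fun ⟨a, b, c, e⟩ _ => ?_
  dsimp only
  by_cases h : (a = b ∧ c = e) ∨ (a = c ∧ b = e) ∨ (a = e ∧ b = c)
  · have hM₀ : 0 ≤ M := (integral_nonneg fun ω => by positivity).trans (hM a)
    have hpaired : 1 ≤ ((if a = b ∧ c = e then 1 else 0) + (if a = c ∧ b = e then 1 else 0) +
        (if a = e ∧ b = c then 1 else 0) : ℝ) := by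
      split_ifs <;> first | tauto | norm_num
    have := integral_mul_mul_mul_le (hd a) (hd b) (hd c) (hd e)
    nlinarith [hM a, hM b, hM c, hM e]
  · rw [integral_mul_mul_mul_eq_zero_of_not_paired hflip h,
      if_neg fun h' => h (Or.inl h'), if_neg fun h' => h (Or.inr (Or.inl h')),
      if_neg fun h' => h (Or.inr (Or.inr h'))]
    simp

end FourthMoments

section AlmostSureConvergence

variable {Ω : Type*} [MeasurableSpace Ω] {P : Measure Ω}

theorem ae_tendsto_zero_of_summable_integral_pow_four {X : ℕ → Ω → ℝ}
    (hX : ∀ k, Integrable (fun ω => X k ω ^ 4) P)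
    (hsum : Summable fun k => ∫ ω, X k ω ^ 4 ∂P) :
    ∀ᵐ ω ∂P, Tendsto (fun k => X k ω) atTop (𝓝 0) := by
  have hmeas : ∀ k, AEMeasurable (fun ω => ENNReal.ofReal (X k ω ^ 4)) P :=
    fun k => (hX k).aemeasurable.ennreal_ofReal
  have hlint : ∀ k, ∫⁻ ω, ENNReal.ofReal (X k ω ^ 4) ∂P = ENNReal.ofReal (∫ ω, X k ω ^ 4 ∂P) :=
    fun k => (ofReal_integral_eq_lintegral_ofReal (hX k) (ae_of_all _ fun ω => by positivity)).symm
  have hfin : ∫⁻ ω, ∑' k, ENNReal.ofReal (X k ω ^ 4) ∂P ≠ ∞ := by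
    rw [lintegral_tsum hmeas, tsum_congr hlint,
      ← ENNReal.ofReal_tsum_of_nonneg (fun k => by positivity) hsum]
    exact ENNReal.ofReal_ne_top
  filter_upwards [ae_lt_top' (AEMeasurable.tsum hmeas) hfin] with ω hω
  have h4 : Tendsto (fun k => X k ω ^ 4) atTop (𝓝 0) :=
    ((ENNReal.tendsto_toReal ENNReal.zero_ne_top).comp
      (ENNReal.tendsto_atTop_zero_of_tsum_ne_top hω.ne)).congr
      fun k => ENNReal.toReal_ofReal (by positivity)
  have := h4.rpow_const (p := ((4 : ℕ) : ℝ)⁻¹) (Or.inr (by positivity))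
  rw [Real.zero_rpow (by norm_num)] at this
  refine (tendsto_zero_iff_abs_tendsto_zero _).2 (this.congr fun k => ?_)
  rw [← Even.pow_abs ⟨2, rfl⟩, Real.pow_rpow_inv_natCast (abs_nonneg _) (by norm_num)]
  rfl

theorem ae_summable_of_integral_pow_four_le {D : ℕ → Ω → ℝ}
    (hD : ∀ k, Integrable (fun ω => D k ω ^ 4) P) {C : ℝ}
    (hC : ∀ k, ∫ ω, D k ω ^ 4 ∂P ≤ C / 4 ^ k) :
    ∀ᵐ ω ∂P, Summable fun k => D k ω := by
  have hpow : ∀ k, (fun ω => ((4 / 3 : ℝ) ^ k * D k ω) ^ 4) =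
      fun ω => (256 / 81 : ℝ) ^ k * D k ω ^ 4 :=
    fun k => funext fun ω => by rw [mul_pow, ← pow_mul, mul_comm k 4, pow_mul]; norm_num
  -- `(4/3)^k D_k → 0` almost surely, so eventually `|D_k| ≤ (3/4)^k`.
  have hX : ∀ᵐ ω ∂P, Tendsto (fun k => (4 / 3 : ℝ) ^ k * D k ω) atTop (𝓝 0) := by
    refine ae_tendsto_zero_of_summable_integral_pow_four (fun k => ?_) ?_
    · rw [hpow]
      exact (hD k).const_mul _
    · refine Summable.of_nonneg_of_le (fun k => integral_nonneg fun ω => by positivity)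
        (fun k => ?_) ((summable_geometric_of_lt_one (by norm_num) (by norm_num :
          (64 / 81 : ℝ) < 1)).mul_left C)
      rw [hpow, integral_const_mul]
      calc (256 / 81 : ℝ) ^ k * ∫ ω, D k ω ^ 4 ∂P ≤ (256 / 81) ^ k * (C / 4 ^ k) := by
            gcongr; exact hC k
        _ = C * ((256 / 81) / 4) ^ k := by rw [div_pow _ (4 : ℝ)]; ring
        _ = C * (64 / 81) ^ k := by norm_num
  filter_upwards [hX] with ω hω
  refine Summable.of_norm_bounded_eventually (summable_geometric_of_lt_one (by norm_num)
    (by norm_num : (3 / 4 : ℝ) < 1)) ?_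
  rw [Nat.cofinite_eq_atTop]
  filter_upwards [hω.eventually (Metric.closedBall_mem_nhds 0 one_pos)] with k hk
  simp only [dist_zero_right, norm_mul, norm_pow, Real.norm_eq_abs,
    abs_of_pos (by norm_num : (0 : ℝ) < 4 / 3)] at hk ⊢
  calc |D k ω| = (3 / 4) ^ k * ((4 / 3) ^ k * |D k ω|) := by
        rw [← mul_assoc, ← mul_pow]; norm_num
    _ ≤ (3 / 4) ^ k * 1 := by gcongr
    _ = (3 / 4) ^ k := mul_one _

theorem exists_ae_tendsto_of_integral_sub_pow_four_le {A : ℕ → Ω → ℝ}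
    (hA : ∀ n, MemLp (A n) 4 P) {C : ℝ}
    (hC : ∀ N n, N ≤ n → n ≤ 2 * N → ∫ ω, (A n ω - A N ω) ^ 4 ∂P ≤ C / n ^ 2) :
    ∃ L : Ω → ℝ, Measurable L ∧ ∀ᵐ ω ∂P, Tendsto (fun n => A n ω) atTop (𝓝 (L ω)) := by
  have hint : ∀ N n, Integrable (fun ω => (A n ω - A N ω) ^ 4) P :=
    fun N n => ((hA n).sub (hA N)).integrable_pow_four
  have hdyadic : ∀ᵐ ω ∂P, Summable fun k => A (2 ^ (k + 1)) ω - A (2 ^ k) ω := by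
    refine ae_summable_of_integral_pow_four_le (C := C / 4) (fun k => hint _ _) fun k => ?_
    calc _ ≤ C / ((2 ^ (k + 1) : ℕ) : ℝ) ^ 2 :=
          hC _ _ (Nat.pow_le_pow_right two_pos k.le_succ) (by rw [pow_succ, mul_comm])
      _ = C / 4 / 4 ^ k := by
          rw [Nat.cast_pow, Nat.cast_ofNat, ← pow_mul, pow_mul', div_div, ← pow_succ']
          norm_num
  have hblock : ∀ᵐ ω ∂P, Tendsto (fun n => A n ω - A (2 ^ Nat.log 2 n) ω) atTop (𝓝 0) := by
    have hsum : Summable fun n : ℕ => C / ((n + 1 : ℕ) : ℝ) ^ 2 := by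
      simpa [div_eq_mul_inv] using ((summable_nat_add_iff 1).2
        (Real.summable_one_div_nat_pow.2 one_lt_two)).mul_left C
    have := ae_tendsto_zero_of_summable_integral_pow_four
      (X := fun n ω => A (n + 1) ω - A (2 ^ Nat.log 2 (n + 1)) ω) (fun n => hint _ _)
      (Summable.of_nonneg_of_le (fun n => integral_nonneg fun ω => by positivity)
        (fun n => hC _ _ (Nat.pow_log_le_self 2 n.succ_ne_zero) ?_) hsum)
    · filter_upwards [this] with ω hω using (tendsto_add_atTop_iff_nat 1).1 hω
    · have := Nat.lt_pow_succ_log_self one_lt_two (n + 1)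
      rw [pow_succ] at this
      omega
  exact measurable_limit_of_tendsto_metrizable_ae (fun n => (hA n).1.aemeasurable) <| by
    filter_upwards [hdyadic, hblock] with ω h₁ h₂ using exists_tendsto_of_summable_dyadic h₁ h₂

end AlmostSureConvergence

namespace Exchangeable

variable {Ω : Type*} [MeasurableSpace Ω] {P : Measure Ω} {ξ : ℕ → Ω → ℝ}

theorem map_swap (hexch : Exchangeable P ξ) {a b n : ℕ} (ha : a < n) (hb : b < n) :
    P.map (fun ω (k : Fin n) => ξ (Equiv.swap a b k) ω) = P.map (fun ω (k : Fin n) => ξ k ω) := by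
  have h := hexch n (Equiv.swap ⟨a, ha⟩ ⟨b, hb⟩)
  simp only [← Fin.val_injective.swap_apply] at h
  exact h

theorem identDistrib (hmeas : ∀ i, Measurable (ξ i)) (hexch : Exchangeable P ξ) (a b : ℕ) :
    IdentDistrib (ξ a) (ξ b) P P := by
  refine ⟨(hmeas a).aemeasurable, (hmeas b).aemeasurable, ?_⟩
  have ha : a < max a b + 1 := by omega
  have h := congrArg (Measure.map fun x : Fin (max a b + 1) → ℝ => x ⟨a, ha⟩)
    (hexch.map_swap ha (by omega : b < max a b + 1))
  rw [Measure.map_map (measurable_pi_apply _) (measurable_pi_lambda _ fun _ => hmeas _),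
    Measure.map_map (measurable_pi_apply _) (measurable_pi_lambda _ fun _ => hmeas _)] at h
  simp only [Function.comp_def, Equiv.swap_apply_left] at h
  exact h.symm

theorem memLp (hmeas : ∀ i, Measurable (ξ i)) (hexch : Exchangeable P ξ) {p : ℝ≥0∞}
    (h : MemLp (ξ 0) p P) (i : ℕ) : MemLp (ξ i) p P :=
  (hexch.identDistrib hmeas i 0).memLp_iff.2 h

theorem comp (hmeas : ∀ i, Measurable (ξ i)) (hexch : Exchangeable P ξ) {g : ℝ → ℝ}
    (hg : Measurable g) : Exchangeable P fun i ω => g (ξ i ω) := by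
  intro n π
  have hG : Measurable fun (x : Fin n → ℝ) k => g (x k) :=
    measurable_pi_lambda _ fun k => hg.comp (measurable_pi_apply k)
  have := congrArg (Measure.map fun (x : Fin n → ℝ) k => g (x k)) (hexch n π)
  rwa [Measure.map_map hG (measurable_pi_lambda _ fun _ => hmeas _),
    Measure.map_map hG (measurable_pi_lambda _ fun _ => hmeas _)] at this

theorem identDistrib_flip_sub (hmeas : ∀ i, Measurable (ξ i)) (hexch : Exchangeable P ξ)
    {ι : Type*} [Fintype ι] [DecidableEq ι] {a b : ι → ℕ} (ha : Function.Injective a)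
    (hb : Function.Injective b) (hab : ∀ i k, a i ≠ b k) (v : ι) :
    IdentDistrib (fun ω i => if i = v then -(ξ (a i) ω - ξ (b i) ω) else ξ (a i) ω - ξ (b i) ω)
      (fun ω i => ξ (a i) ω - ξ (b i) ω) P P := by
  set n := ∑ i, (a i + b i) + 1
  have hle : ∀ i, a i + b i < n := fun i => Nat.lt_succ_of_le
    (Finset.single_le_sum (fun j _ => Nat.zero_le (a j + b j)) (Finset.mem_univ i))
  let G : (Fin n → ℝ) → ι → ℝ := fun x i => x ⟨a i, by grind⟩ - x ⟨b i, by grind⟩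
  have hG : Measurable G :=
    measurable_pi_lambda _ fun i => (measurable_pi_apply _).sub (measurable_pi_apply _)
  have hswap : IdentDistrib (fun ω (k : Fin n) => ξ (Equiv.swap (a v) (b v) k) ω)
      (fun ω (k : Fin n) => ξ k ω) P P :=
    ⟨(measurable_pi_lambda _ fun _ => hmeas _).aemeasurable,
      (measurable_pi_lambda _ fun _ => hmeas _).aemeasurable,
      hexch.map_swap (by grind) (by grind)⟩
  convert hswap.comp hG using 1
  · funext ω i
    simp only [Function.comp, G]
    by_cases hi : i = v
    · subst hi
      simp
    · rw [if_neg hi, Equiv.swap_apply_of_ne_of_ne (ha.ne hi) (hab i v),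
        Equiv.swap_apply_of_ne_of_ne (hab v i).symm (hb.ne hi)]
  · rfl

theorem integral_sum_sub_pow_four_le (hmeas : ∀ i, Measurable (ξ i)) (hexch : Exchangeable P ξ)
    (h4 : MemLp (ξ 0) 4 P) {ι : Type*} [Fintype ι] [DecidableEq ι] {a b : ι → ℕ}
    (ha : Function.Injective a) (hb : Function.Injective b) (hab : ∀ i k, a i ≠ b k) :
    ∫ ω, (∑ i, (ξ (a i) ω - ξ (b i) ω)) ^ 4 ∂P ≤
      48 * Fintype.card ι ^ 2 * ∫ ω, ξ 0 ω ^ 4 ∂P := by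
  have hmem := hexch.memLp hmeas h4
  have hmom : ∀ k, ∫ ω, ξ k ω ^ 4 ∂P = ∫ ω, ξ 0 ω ^ 4 ∂P := fun k =>
    ((hexch.identDistrib hmeas k 0).comp (measurable_id.pow_const 4)).integral_eq
  have hM : ∀ i, ∫ ω, (ξ (a i) ω - ξ (b i) ω) ^ 4 ∂P ≤ 16 * ∫ ω, ξ 0 ω ^ 4 ∂P := fun i => calc
      _ ≤ ∫ ω, 8 * (ξ (a i) ω ^ 4 + ξ (b i) ω ^ 4) ∂P :=
        integral_mono ((hmem _).sub (hmem _)).integrable_pow_four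
          (((hmem _).integrable_pow_four.add (hmem _).integrable_pow_four).const_mul 8)
          fun ω => sub_pow_four_le _ _
      _ = _ := by
        rw [integral_const_mul, integral_add (hmem _).integrable_pow_four
          (hmem _).integrable_pow_four, hmom (a i), hmom (b i)]
        ring
  have := integral_sum_pow_four_le (d := fun i ω => ξ (a i) ω - ξ (b i) ω)
    (fun i => (hmem (a i)).sub (hmem (b i))) hM (hexch.identDistrib_flip_sub hmeas ha hb hab)
  linarith

end Exchangeable

def empiricalMean {Ω : Type*} (ξ : ℕ → Ω → ℝ) (n : ℕ) (ω : Ω) : ℝ :=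
  (∑ i ∈ Finset.range n, ξ i ω) / n

section EmpiricalMean

variable {Ω : Type*}

theorem sq_empiricalMean_le (ξ : ℕ → Ω → ℝ) (n : ℕ) (ω : Ω) :
    empiricalMean ξ n ω ^ 2 ≤ empiricalMean (fun i ω => ξ i ω ^ 2) n ω := by
  simpa [empiricalMean] using
    sum_div_card_sq_le_sum_sq_div_card (s := Finset.range n) (f := (ξ · ω))

-- `s + Fin.castLE hj i` is addition in `Fin N`, i.e. the old index `s + i` taken modulo `N`.
def rotationBlock (ξ : ℕ → Ω → ℝ) {N j : ℕ} (hj : j ≤ N) (s : Fin N) (ω : Ω) : ℝ :=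
  ∑ i : Fin j, (ξ (N + i) ω - ξ (s + Fin.castLE hj i : Fin N) ω)

theorem mul_mul_empiricalMean_sub (ξ : ℕ → Ω → ℝ) (ω : Ω) {N n : ℕ} (hN : 0 < N)
    (hNn : N ≤ n) (hj : n - N ≤ N) :
    (n : ℝ) * N * (empiricalMean ξ n ω - empiricalMean ξ N ω) =
      ∑ s : Fin N, rotationBlock ξ hj s ω := by
  have : NeZero N := ⟨hN.ne'⟩
  have hrot : ∀ c : Fin N, ∑ s : Fin N, ξ (s + c : Fin N) ω = ∑ s ∈ Finset.range N, ξ s ω :=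
    fun c => (Equiv.sum_comp (Equiv.addRight c) fun s : Fin N => ξ s ω).trans
      (Fin.sum_univ_eq_sum_range (fun s => ξ s ω) N)
  simp only [rotationBlock, Finset.sum_sub_distrib, Finset.sum_const, Finset.card_univ,
    Fintype.card_fin, nsmul_eq_mul]
  rw [Finset.sum_comm (f := fun s i => ξ (s + Fin.castLE hj i : Fin N) ω)]
  simp only [hrot, Finset.sum_const, Finset.card_univ, Fintype.card_fin, nsmul_eq_mul,
    Fin.sum_univ_eq_sum_range (fun i => ξ (N + i) ω)]
  obtain ⟨j, rfl⟩ := Nat.exists_eq_add_of_le hNn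
  rw [empiricalMean, empiricalMean, Finset.sum_range_add, Nat.add_sub_cancel_left]
  have hN' : (N : ℝ) ≠ 0 := by positivity
  have hn' : ((N + j : ℕ) : ℝ) ≠ 0 := by positivity
  field_simp
  push_cast
  ring

variable [MeasurableSpace Ω] {P : Measure Ω} {ξ : ℕ → Ω → ℝ}

theorem memLp_empiricalMean {p : ℝ≥0∞} (h : ∀ i, MemLp (ξ i) p P) (n : ℕ) :
    MemLp (empiricalMean ξ n) p P := by
  show MemLp (fun ω => (∑ i ∈ Finset.range n, ξ i ω) / n) p P
  simpa only [div_eq_mul_inv] using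
    (memLp_finsetSum (Finset.range n) fun i _ => h i).mul_const _

theorem Exchangeable.integral_rotationBlock_pow_four_le (hmeas : ∀ i, Measurable (ξ i))
    (hexch : Exchangeable P ξ) (h4 : MemLp (ξ 0) 4 P) {N j : ℕ} [NeZero N] (hj : j ≤ N)
    (s : Fin N) :
    ∫ ω, rotationBlock ξ hj s ω ^ 4 ∂P ≤ 48 * j ^ 2 * ∫ ω, ξ 0 ω ^ 4 ∂P := by
  have h := hexch.integral_sum_sub_pow_four_le hmeas h4
    (a := fun i : Fin j => N + i) (b := fun i => (s + Fin.castLE hj i : Fin N))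
    (fun i k h => Fin.ext (by simpa using h))
    (fun i k h => Fin.castLE_injective hj (add_left_cancel (Fin.ext h)))
    (fun i k => by have := (s + Fin.castLE hj k).isLt; omega)
  rwa [Fintype.card_fin] at h

theorem Exchangeable.integral_empiricalMean_sub_pow_four_le (hmeas : ∀ i, Measurable (ξ i))
    (hexch : Exchangeable P ξ) (h4 : MemLp (ξ 0) 4 P) {N n : ℕ} (hNn : N ≤ n) (hn : n ≤ 2 * N) :
    ∫ ω, (empiricalMean ξ n ω - empiricalMean ξ N ω) ^ 4 ∂P ≤
      48 * (∫ ω, ξ 0 ω ^ 4 ∂P) / n ^ 2 := by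
  rcases Nat.eq_zero_or_pos N with rfl | hN
  · obtain rfl : n = 0 := by omega
    simp
  have hj : n - N ≤ N := by omega
  have : NeZero N := ⟨hN.ne'⟩
  have hint : ∀ s, Integrable (fun ω => rotationBlock ξ hj s ω ^ 4) P := fun s =>
    (memLp_finsetSum _ fun i _ =>
      (hexch.memLp hmeas h4 _).sub (hexch.memLp hmeas h4 _)).integrable_pow_four
  have hmain : ((n : ℝ) * N) ^ 4 * ∫ ω, (empiricalMean ξ n ω - empiricalMean ξ N ω) ^ 4 ∂P ≤
      (N : ℝ) ^ 3 * ∑ s, ∫ ω, rotationBlock ξ hj s ω ^ 4 ∂P := by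
    rw [← integral_const_mul, ← integral_finsetSum _ fun s _ => hint s, ← integral_const_mul]
    refine integral_mono_of_nonneg (ae_of_all _ fun ω => by positivity)
      ((integrable_finsetSum _ fun s _ => hint s).const_mul _) (ae_of_all _ fun ω => ?_)
    dsimp only
    rw [← mul_pow, mul_mul_empiricalMean_sub ξ ω hN hNn hj]
    simpa only [Fintype.card_fin] using Fintype.sum_pow_four_le fun s => rotationBlock ξ hj s ω
  have hsum : ∑ s, ∫ ω, rotationBlock ξ hj s ω ^ 4 ∂P ≤
      N * (48 * (n - N : ℕ) ^ 2 * ∫ ω, ξ 0 ω ^ 4 ∂P) := by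
    simpa using Finset.sum_le_sum (s := Finset.univ) fun s _ =>
      hexch.integral_rotationBlock_pow_four_le hmeas h4 hj s
  have hjn : ((n - N : ℕ) : ℝ) ≤ n := by exact_mod_cast Nat.sub_le n N
  have hn₀ : (0 : ℝ) < n := by exact_mod_cast hN.trans_le hNn
  have hN₀ : (0 : ℝ) < N := by exact_mod_cast hN
  rw [le_div_iff₀ (by positivity)]
  refine le_of_mul_le_mul_left ?_ (by positivity : (0 : ℝ) < N ^ 4 * n ^ 2)
  calc _ = ((n : ℝ) * N) ^ 4 * ∫ ω, (empiricalMean ξ n ω - empiricalMean ξ N ω) ^ 4 ∂P := by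
        ring
    _ ≤ N ^ 3 * (N * (48 * (n - N : ℕ) ^ 2 * ∫ ω, ξ 0 ω ^ 4 ∂P)) := hmain.trans (by gcongr)
    _ ≤ N ^ 3 * (N * (48 * n ^ 2 * ∫ ω, ξ 0 ω ^ 4 ∂P)) := by gcongr
    _ = _ := by ring

theorem Exchangeable.exists_ae_tendsto_empiricalMean (hmeas : ∀ i, Measurable (ξ i))
    (hexch : Exchangeable P ξ) (h4 : MemLp (ξ 0) 4 P) :
    ∃ L : Ω → ℝ, Measurable L ∧
      ∀ᵐ ω ∂P, Tendsto (fun n => empiricalMean ξ n ω) atTop (𝓝 (L ω)) :=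
  exists_ae_tendsto_of_integral_sub_pow_four_le (memLp_empiricalMean (hexch.memLp hmeas h4))
    fun _ _ => hexch.integral_empiricalMean_sub_pow_four_le hmeas h4

end EmpiricalMean

theorem stmt11_general {Ω : Type*} [MeasurableSpace Ω] (P : Measure Ω)
    (ξ : ℕ → Ω → ℝ) (hmeas : ∀ i, Measurable (ξ i)) (hexch : Exchangeable P ξ)
    (hmom : ∀ p : ℕ, Integrable (fun ω => |ξ 0 ω| ^ p) P) :
    ∃ V : Ω → ℝ, Measurable V ∧
      (∀ᵐ ω ∂P,
        Tendsto (fun n : ℕ =>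
            (∑ i ∈ Finset.range n, (ξ i ω) ^ 2) / n -
              ((∑ i ∈ Finset.range n, ξ i ω) / n) ^ 2)
          atTop (𝓝 (V ω))) ∧
      (∀ᵐ ω ∂P, 0 ≤ V ω) := by
  have hmeas₂ : ∀ i, Measurable fun ω => ξ i ω ^ 2 := fun i => (hmeas i).pow_const 2
  obtain ⟨L, hL, hLt⟩ := hexch.exists_ae_tendsto_empiricalMean hmeas <| by
    exact_mod_cast memLp_of_integrable_abs_pow (hmeas 0).aestronglyMeasurable four_ne_zero (hmom 4)
  obtain ⟨W, hW, hWt⟩ := (hexch.comp hmeas (measurable_id.pow_const 2)).exists_ae_tendsto_empiricalMean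
    hmeas₂ <| by
      exact_mod_cast memLp_of_integrable_abs_pow (hmeas₂ 0).aestronglyMeasurable four_ne_zero
        (by simpa only [abs_pow, ← pow_mul] using hmom 8)
  refine ⟨fun ω => W ω - L ω ^ 2, hW.sub (hL.pow_const 2), ?_, ?_⟩
  · filter_upwards [hLt, hWt] with ω hL hW using hW.sub (hL.pow 2)
  · filter_upwards [hLt, hWt] with ω hL hW
    exact sub_nonneg.2 (le_of_tendsto_of_tendsto' (hL.pow 2) hW (sq_empiricalMean_le ξ · ω))

/-- For an exchangeable sequence the empirical variances
`V_n = (1/n) Σ ξ_i² - ((1/n) Σ ξ_i)²` converge `P`-almost surely to a random variable `V`,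
and `V ≥ 0` almost surely. -/
theorem stmt11 {Ω : Type*} [MeasurableSpace Ω] (P : Measure Ω) [IsProbabilityMeasure P]
    (ξ : ℕ → Ω → ℝ) (hmeas : ∀ i, Measurable (ξ i)) (hexch : Exchangeable P ξ)
    (hmom : ∀ p : ℕ, Integrable (fun ω => |ξ 0 ω| ^ p) P) :
    ∃ V : Ω → ℝ, Measurable V ∧
      (∀ᵐ ω ∂P,
        Tendsto (fun n : ℕ =>
            (∑ i ∈ Finset.range n, (ξ i ω) ^ 2) / n -
              ((∑ i ∈ Finset.range n, ξ i ω) / n) ^ 2)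
          atTop (𝓝 (V ω))) ∧
      (∀ᵐ ω ∂P, 0 ≤ V ω) :=
  stmt11_general P ξ hmeas hexch hmom
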